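/- Let x ∈ ℝⁿ and let k ∈ ℕ with k ≤ n. Denote by ‖x‖_{1,k} the sum of the k largest values among |x₁|, …, |xₙ| (the largest-k norm). Then ‖x‖₀ ≤ k if and only if ‖x‖₁ − ‖x‖_{1,k} = 0, i.e., if and only if the ℓ₁-norm of x equals the sum of its k largest absolute entries. -/

import Mathlib

/-!
The largest-`k` sum never exceeds `‖x‖₁`, so `‖x‖₁ - ‖x‖_{1,k} = 0` says that some index set `T`
of size `k` already carries the whole `ℓ₁`-norm. Since all terms `|xᵢ|` are nonnegative, this
happens exactly when `T` contains the support of `x`, and a `k`-set containing the support exists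
exactly when the support has at most `k` elements.
-/

/-- The number of nonzero entries of a vector (the "ℓ₀-norm"). -/
noncomputable def card0 {n : ℕ} (x : Fin n → ℝ) : ℕ := {i | x i ≠ 0}.ncard

open Finset

namespace Finset

variable {ι M : Type*} [Fintype ι]

lemma card_le_iff_exists_superset_card_eq {s : Finset ι} {k : ℕ} (hk : k ≤ Fintype.card ι) :
    #s ≤ k ↔ ∃ T, s ⊆ T ∧ #T = k :=
  ⟨fun hs => exists_superset_card_eq hs hk, fun ⟨_, hsT, hT⟩ => hT ▸ card_le_card hsT⟩

lemma sum_eq_sum_univ_iff_of_nonneg [AddCommMonoid M] [PartialOrder M]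
    [IsOrderedCancelAddMonoid M] {f : ι → M} (hf : ∀ i, 0 ≤ f i) {T : Finset ι} :
    ∑ i ∈ T, f i = ∑ i, f i ↔ ∀ i ∉ T, f i = 0 := by
  refine ⟨fun h i hi => ?_, fun h => sum_subset (subset_univ T) fun i _ hi => h i hi⟩
  by_contra hfi
  exact (sum_lt_sum_of_subset (subset_univ T) (mem_univ i) hi
    ((hf i).lt_of_ne' hfi) fun j _ _ => hf j).ne h

section LinearOrder

variable [AddCommMonoid M] [LinearOrder M] [IsOrderedCancelAddMonoid M] {f : ι → M} {k : ℕ}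

lemma sup'_powersetCard_sum_le_sum_univ (hf : ∀ i, 0 ≤ f i)
    (hne : ((univ : Finset ι).powersetCard k).Nonempty) :
    (univ.powersetCard k).sup' hne (fun T => ∑ i ∈ T, f i) ≤ ∑ i, f i :=
  sup'_le _ _ fun _ _ => sum_le_univ_sum_of_nonneg hf

lemma sum_univ_le_sup'_powersetCard_iff (hf : ∀ i, 0 ≤ f i)
    (hne : ((univ : Finset ι).powersetCard k).Nonempty) :
    ∑ i, f i ≤ (univ.powersetCard k).sup' hne (fun T => ∑ i ∈ T, f i) ↔
      #{i | f i ≠ 0} ≤ k := by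
  have hk : k ≤ Fintype.card ι := by simpa using powersetCard_nonempty.1 hne
  rw [le_sup'_iff, card_le_iff_exists_superset_card_eq hk]
  refine exists_congr fun T => ?_
  rw [mem_powersetCard, (sum_le_univ_sum_of_nonneg hf).ge_iff_eq, eq_comm,
    sum_eq_sum_univ_iff_of_nonneg hf, and_right_comm, and_iff_right (subset_univ T)]
  simp only [subset_iff, mem_filter_univ, not_imp_comm]

end LinearOrder

end Finset

lemma card0_eq_card_filter {n : ℕ} (x : Fin n → ℝ) : card0 x = #{i | x i ≠ 0} := by
  rw [card0, Set.ncard_eq_toFinset_card', Set.toFinset_ofPred]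

theorem card_le_iff_largest_k_norm_general
    (n k : ℕ) (x : Fin n → ℝ)
    (hne : ((Finset.univ : Finset (Fin n)).powersetCard k).Nonempty) :
    card0 x ≤ k ↔
      (∑ i, |x i|) -
        (((Finset.univ : Finset (Fin n)).powersetCard k).sup' hne
          (fun T => ∑ i ∈ T, |x i|)) = 0 := by
  have habs : ∀ i, 0 ≤ |x i| := fun i => abs_nonneg (x i)
  rw [sub_eq_zero, ← (sup'_powersetCard_sum_le_sum_univ habs hne).ge_iff_eq',
    sum_univ_le_sup'_powersetCard_iff habs hne, card0_eq_card_filter]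
  simp only [ne_eq, abs_eq_zero]

/-- DC reformulation of the cardinality constraint: `‖x‖₀ ≤ k` iff `‖x‖₁ - ‖x‖_{1,k} = 0`,
where the largest-`k` norm `‖x‖_{1,k}` (the sum of the `k` largest absolute entries of `x`)
is expressed as the maximum of `∑_{i ∈ T} |x i|` over all index sets `T` of size `k`. -/
theorem card_le_iff_largest_k_norm
    (n k : ℕ) (hk : k ≤ n) (x : Fin n → ℝ)
    (hne : ((Finset.univ : Finset (Fin n)).powersetCard k).Nonempty) :
    card0 x ≤ k ↔
      (∑ i, |x i|) -
        (((Finset.univ : Finset (Fin n)).powersetCard k).sup' hne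
          (fun T => ∑ i ∈ T, |x i|)) = 0 :=
  card_le_iff_largest_k_norm_general n k x hne
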